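/- Let M be a planar hypermap and l a ring of faces in M whose first element has dart x, with y = α₀(x) and x₀ the bottom of the 0-orbit of x. Assume y and x₀ are not in the same face of M. Let M₁ = B M 0 x be M with the 0-link at x broken. Then the tail of l still satisfies all four ring conditions (edge unicity, face continuity, circularity, and face simplicity) in M₁. -/

import Mathlib

open scoped Classical

/-- Dimensions 0 and 1. -/
inductive Dim : Type
  | zero : Dim
  | one : Dim
deriving DecidableEq

/-- Free maps: empty map, dart insertion, dart linking at a dimension. -/
inductive Fmap : Type
  | V : Fmap
  | I : Fmap → Nat → Fmap
  | L : Fmap → Dim → Nat → Nat → Fmap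

namespace Fmap

/-- The nil (exception) dart. -/
def nil : Nat := 0

/-- A dart exists in the map. -/
def exd : Fmap → Nat → Prop
  | V, _ => False
  | I m0 x, z => z = x ∨ exd m0 z
  | L m0 _ _ _, z => exd m0 z

/-- The (partial) k-successor α_k, with nil for undefined. -/
def A : Fmap → Dim → Nat → Nat
  | V, _, _ => nil
  | I m0 _, k, z => A m0 k z
  | L m0 k0 x y, k, z =>
      if k = k0 then (if z = x then y else A m0 k z) else A m0 k z

/-- The (partial) k-predecessor. -/
def A_1 : Fmap → Dim → Nat → Nat
  | V, _, _ => nil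
  | I m0 _, k, z => A_1 m0 k z
  | L m0 k0 x y, k, z =>
      if k = k0 then (if z = y then x else A_1 m0 k z) else A_1 m0 k z

/-- z has a k-successor. -/
def succd (m : Fmap) (k : Dim) (z : Nat) : Prop := A m k z ≠ nil

/-- z has a k-predecessor. -/
def predd (m : Fmap) (k : Dim) (z : Nat) : Prop := A_1 m k z ≠ nil

/-- Bottom dart of the open k-orbit of z. -/
def bottom : Fmap → Dim → Nat → Nat
  | V, _, _ => nil
  | I m0 x, k, z => if z = x then z else bottom m0 k z
  | L m0 k0 x y, k, z =>
      if k = k0 then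
        (if bottom m0 k z = y then bottom m0 k x else bottom m0 k z)
      else bottom m0 k z

/-- Top dart of the open k-orbit of z. -/
def top : Fmap → Dim → Nat → Nat
  | V, _, _ => nil
  | I m0 x, k, z => if z = x then z else top m0 k z
  | L m0 k0 x y, k, z =>
      if k = k0 then
        (if top m0 k z = x then top m0 k y else top m0 k z)
      else top m0 k z

/-- Closure of A: a permutation of existing darts. -/
def cA : Fmap → Dim → Nat → Nat
  | V, _, _ => nil
  | I m0 x, k, z => if z = x then z else cA m0 k z
  | L m0 k0 x y, k, z =>
      if k = k0 then
        (if z = x then y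
         else if z = top m0 k y then bottom m0 k x
         else cA m0 k z)
      else cA m0 k z

/-- Closure of A_1: the inverse permutation of cA. -/
def cA_1 : Fmap → Dim → Nat → Nat
  | V, _, _ => nil
  | I m0 x, k, z => if z = x then z else cA_1 m0 k z
  | L m0 k0 x y, k, z =>
      if k = k0 then
        (if z = y then x
         else if z = bottom m0 k x then top m0 k y
         else cA_1 m0 k z)
      else cA_1 m0 k z

/-- Precondition for inserting a dart. -/
def prec_I (m : Fmap) (x : Nat) : Prop := x ≠ nil ∧ ¬ exd m x

/-- Precondition for linking two darts at a dimension (keeping orbits open). -/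
def prec_L (m : Fmap) (k : Dim) (x y : Nat) : Prop :=
  exd m x ∧ exd m y ∧ ¬ succd m k x ∧ ¬ predd m k y ∧ cA m k x ≠ y

/-- The hypermap invariant. -/
def inv_hmap : Fmap → Prop
  | V => True
  | I m0 x => inv_hmap m0 ∧ prec_I m0 x
  | L m0 k0 x y => inv_hmap m0 ∧ prec_L m0 k0 x y

/-- The closed face map cF, corresponding to φ = α₁⁻¹ ∘ α₀⁻¹. -/
def cF (m : Fmap) (z : Nat) : Nat := cA_1 m Dim.one (cA_1 m Dim.zero z)

/-- Two darts are in the same face (existence of a cF-path). -/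
def expf (m : Fmap) (z t : Nat) : Prop := exd m z ∧ ∃ n : ℕ, (cF m)^[n] z = t

/-- Two darts are in the same edge (existence of a (cA zero)-path). -/
def expe (m : Fmap) (z t : Nat) : Prop := exd m z ∧ ∃ n : ℕ, (fun w => cA m Dim.zero w)^[n] z = t

/-- Two darts are in the same connected component. -/
def eqc : Fmap → Nat → Nat → Prop
  | V, _, _ => False
  | I m0 x, z, t => (z = x ∧ t = x) ∨ eqc m0 z t
  | L m0 _ x y, z, t =>
      eqc m0 z t ∨ (eqc m0 z x ∧ eqc m0 y t) ∨ (eqc m0 z y ∧ eqc m0 x t)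

/-- Number of darts. -/
def nd : Fmap → ℤ
  | V => 0
  | I m0 _ => nd m0 + 1
  | L m0 _ _ _ => nd m0

/-- Number of vertices. -/
def nv : Fmap → ℤ
  | V => 0
  | I m0 _ => nv m0 + 1
  | L m0 Dim.zero _ _ => nv m0
  | L m0 Dim.one _ _ => nv m0 - 1

/-- Number of edges. -/
def ne : Fmap → ℤ
  | V => 0
  | I m0 _ => ne m0 + 1
  | L m0 Dim.zero _ _ => ne m0 - 1
  | L m0 Dim.one _ _ => ne m0

/-- Number of faces. -/
noncomputable def nf : Fmap → ℤ
  | V => 0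
  | I m0 _ => nf m0 + 1
  | L m0 Dim.zero x y => if expf m0 (cA_1 m0 Dim.one x) y then nf m0 + 1 else nf m0 - 1
  | L m0 Dim.one x y => if expf m0 x (cA m0 Dim.zero y) then nf m0 + 1 else nf m0 - 1

/-- Number of connected components. -/
noncomputable def nc : Fmap → ℤ
  | V => 0
  | I m0 _ => nc m0 + 1
  | L m0 _ x y => if eqc m0 x y then nc m0 else nc m0 - 1

/-- Euler characteristic. -/
noncomputable def ec (m : Fmap) : ℤ := nv m + ne m + nf m - nd m

/-- Genus. -/
noncomputable def genus (m : Fmap) : ℤ := nc m - ec m / 2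

/-- Planarity. -/
def planar (m : Fmap) : Prop := genus m = 0

/-- Breaking the latest forward k-link of x. -/
def B : Fmap → Dim → Nat → Fmap
  | V, _, _ => V
  | I m0 x0, k, x => I (B m0 k x) x0
  | L m0 k0 x0 y0, k, x =>
      if k = k0 ∧ x = x0 then m0 else L (B m0 k x) k0 x0 y0

/-- Breaking all the 0-links of the darts of a list, first one first. -/
def Bl (m : Fmap) : List (Nat × Bool) → Fmap
  | [] => m
  | (x, _) :: l0 => Bl (B m Dim.zero x) l0

/-- The dart representing the face coded by a double-link (x, b). -/
def faceDart (m : Fmap) : Nat × Bool → Nat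
  | (x, b) => if b then A m Dim.zero x else bottom m Dim.zero x

/-- The edge of x is distinct from the edges of the darts of a list. -/
def distinct_edge_list (m : Fmap) (x : Nat) : List (Nat × Bool) → Prop
  | [] => True
  | (x', _) :: l0 => distinct_edge_list m x l0 ∧ ¬ expe m x x'

/-- Ring condition (0): unicity of edges, and each dart 0-linked. -/
def pre_ring0 (m : Fmap) : List (Nat × Bool) → Prop
  | [] => True
  | (x, _) :: l0 => pre_ring0 m l0 ∧ distinct_edge_list m x l0 ∧ succd m Dim.zero x

/-- Adjacency of the faces coded by two double-links. -/
def adjacent_faces (m : Fmap) : Nat × Bool → Nat × Bool → Prop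
  | (x, b), (x', b') =>
      let y := A m Dim.zero x
      let y' := A m Dim.zero x'
      let x0 := bottom m Dim.zero x
      let x'0 := bottom m Dim.zero x'
      if b then (if b' then expf m x0 y' else expf m x0 x'0)
      else (if b' then expf m y y' else expf m y x'0)

/-- Ring condition (1): continuity. -/
def pre_ring1 (m : Fmap) : List (Nat × Bool) → Prop
  | [] => True
  | xb :: l0 =>
      pre_ring1 m l0 ∧
      match l0 with
      | [] => True
      | xb' :: _ => adjacent_faces m xb xb'

/-- Last element of a list of double-links (with default). -/
def lastd : List (Nat × Bool) → Nat × Bool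
  | [] => (nil, true)
  | [a] => a
  | _ :: a :: l0 => lastd (a :: l0)

/-- Ring condition (2): circularity. -/
def pre_ring2 (m : Fmap) : List (Nat × Bool) → Prop
  | [] => True
  | (x, b) :: l0 =>
      match l0 with
      | [] => expf m (A m Dim.zero x) (bottom m Dim.zero x)
      | _ :: _ => adjacent_faces m (lastd l0) (x, b)

/-- The faces coded by two double-links are distinct. -/
def distinct_faces (m : Fmap) (xb xb' : Nat × Bool) : Prop :=
  ¬ expf m (faceDart m xb) (faceDart m xb')

/-- The face of xb is distinct from the faces of a list. -/
def distinct_face_list (m : Fmap) (xb : Nat × Bool) : List (Nat × Bool) → Prop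
  | [] => True
  | xb' :: l0 => distinct_face_list m xb l0 ∧ distinct_faces m xb xb'

/-- Ring condition (3): simplicity. -/
def pre_ring3 (m : Fmap) : List (Nat × Bool) → Prop
  | [] => True
  | xb :: l0 => pre_ring3 m l0 ∧ distinct_face_list m xb l0

/-- A ring of faces. -/
def ring (m : Fmap) (l : List (Nat × Bool)) : Prop :=
  l ≠ [] ∧ pre_ring0 m l ∧ pre_ring1 m l ∧ pre_ring2 m l ∧ pre_ring3 m l

end Fmap

open Fmap

/-!
Breaking the `0`-link `x → y` changes the closed `0`-permutation by a transposition: in the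
orbit `x₀ → ⋯ → x → y → ⋯ → top`, the dart `x` now closes up to `x₀` and `top` to `y`. Hence
the face permutation `cF = cA₁⁻¹ ∘ cA₀⁻¹` becomes `cF ∘ swap y x₀`. Since `y` and `x₀` lie in
different faces, the new faces are the old ones, except that the faces of `y` and `x₀` are
merged; the edges other than that of `x` do not change at all.

The remaining double links have edges distinct from that of `x`, so the darts coding their
faces, their edges and their adjacencies survive the break. Circularity is restored through the
merged face, which contains both ends of the removed double link `(x, b)`. Two remaining faces
cannot become equal, since one of the two merged faces is that of `(x, b)`, from which they all
differ.
-/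

section Iterate

open Function Set

variable {α : Type*} {f g : α → α} {s : Set α} {a b z t u : α}

def Reaches (f : α → α) (z t : α) : Prop := ∃ n, f^[n] z = t

theorem Reaches.refl (f : α → α) (z : α) : Reaches f z z := ⟨0, rfl⟩

theorem reaches_apply (f : α → α) (z : α) : Reaches f z (f z) := ⟨1, rfl⟩

theorem Reaches.trans (h₁ : Reaches f z t) (h₂ : Reaches f t u) : Reaches f z u := by
  obtain ⟨n, rfl⟩ := h₁
  obtain ⟨n', rfl⟩ := h₂
  exact ⟨n' + n, iterate_add_apply f n' n z⟩

theorem Reaches.mem (hf : MapsTo f s s) (hz : z ∈ s) (h : Reaches f z t) : t ∈ s := by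
  obtain ⟨n, rfl⟩ := h
  exact hf.iterate n hz

theorem mem_periodicPts_of_injOn (hs : s.Finite) (hf : MapsTo f s s) (hinj : InjOn f s)
    (hz : z ∈ s) : z ∈ periodicPts f := by
  have : Finite s := hs.to_subtype
  obtain ⟨n, hn, hper⟩ := mem_periodicPts.1 ((hf.restrict_inj.2 hinj).mem_periodicPts ⟨z, hz⟩)
  refine mk_mem_periodicPts hn ?_
  simpa [IsPeriodicPt, IsFixedPt, hf.iterate_restrict] using congrArg Subtype.val hper

theorem Reaches.symm (hs : s.Finite) (hf : MapsTo f s s) (hinj : InjOn f s) (hz : z ∈ s)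
    (h : Reaches f z t) : Reaches f t z := by
  obtain ⟨n, rfl⟩ := h
  have hper := isPeriodicPt_minimalPeriod f z
  have hp := minimalPeriod_pos_of_mem_periodicPts (mem_periodicPts_of_injOn hs hf hinj hz)
  refine ⟨minimalPeriod f z * (n + 1) - n, ?_⟩
  rw [← iterate_add_apply, Nat.sub_add_cancel (by nlinarith)]
  exact hper.mul_const (n + 1)

theorem iterate_eq_of_forall_lt {n : ℕ} (h : ∀ i < n, g (f^[i] z) = f (f^[i] z)) :
    g^[n] z = f^[n] z := by
  induction n with
  | zero => rfl
  | succ n ih =>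
    rw [iterate_succ_apply', iterate_succ_apply', ih fun i hi => h i (by omega), h n (by omega)]

theorem apply_iterate_ne_of_iterate_ne {c : α} (hc : f c = c) {n i : ℕ} (hn : f^[n] z ≠ c)
    (hi : i < n) : f (f^[i] z) ≠ c := by
  intro e
  apply hn
  rw [← Nat.sub_add_cancel hi, iterate_add_apply, iterate_succ_apply', e, iterate_fixed hc]

theorem iterate_eq_of_eqOn (hfg : EqOn g f s) (hf : MapsTo f s s) (hz : z ∈ s) (n : ℕ) :
    g^[n] z = f^[n] z :=
  iterate_eq_of_forall_lt fun i _ => hfg (hf.iterate i hz)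

/-- The orbits of `f ∘ swap a b` lie in those of `f`, except that the orbits of `a` and `b` may
merge. -/
theorem reaches_or_of_reaches_comp_swap [DecidableEq α] (hs : s.Finite) (hf : MapsTo f s s)
    (hinj : InjOn f s) (ha : a ∈ s) (hb : b ∈ s) (hg : ∀ w ∈ s, g w = f (Equiv.swap a b w))
    (hz : z ∈ s) (h : Reaches g z t) :
    Reaches f z t ∨ ((Reaches f a z ∨ Reaches f b z) ∧ (Reaches f a t ∨ Reaches f b t)) := by
  have hswap : ∀ w ∈ s, Equiv.swap a b w ∈ s := fun w hw => by
    rw [Equiv.swap_apply_def]; split_ifs <;> assumption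
  have hg' : MapsTo g s s := fun w hw => hg w hw ▸ hf (hswap w hw)
  obtain ⟨n, rfl⟩ := h
  induction n with
  | zero => exact Or.inl (Reaches.refl f z)
  | succ n ih =>
    set w := g^[n] z
    have hw : w ∈ s := hg'.iterate n hz
    rw [iterate_succ_apply', hg w hw]
    by_cases hwa : w = a
    · rw [hwa, Equiv.swap_apply_left]
      refine Or.inr ⟨?_, Or.inr (reaches_apply f b)⟩
      rcases ih with h | h
      · exact Or.inl ((hwa ▸ h).symm hs hf hinj hz)
      · exact h.1
    by_cases hwb : w = b
    · rw [hwb, Equiv.swap_apply_right]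
      refine Or.inr ⟨?_, Or.inl (reaches_apply f a)⟩
      rcases ih with h | h
      · exact Or.inr ((hwb ▸ h).symm hs hf hinj hz)
      · exact h.1
    rw [Equiv.swap_apply_of_ne_of_ne hwa hwb]
    rcases ih with h | ⟨hz', h | h⟩
    · exact Or.inl (h.trans (reaches_apply f w))
    · exact Or.inr ⟨hz', Or.inl (h.trans (reaches_apply f w))⟩
    · exact Or.inr ⟨hz', Or.inr (h.trans (reaches_apply f w))⟩

/-- `g b = f a`, and from there `g` follows the `f`-cycle of `a`, which avoids `b`, back to `a`. -/
theorem reaches_comp_swap [DecidableEq α] (hs : s.Finite) (hf : MapsTo f s s)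
    (hinj : InjOn f s) (ha : a ∈ s) (hb : b ∈ s) (hg : ∀ w ∈ s, g w = f (Equiv.swap a b w))
    (hab : ¬ Reaches f a b) : Reaches g b a := by
  have hp := minimalPeriod_pos_of_mem_periodicPts (mem_periodicPts_of_injOn hs hf hinj ha)
  set p := minimalPeriod f a
  have hagree : ∀ i < p - 1, g (f^[i] (f a)) = f (f^[i] (f a)) := by
    intro i hi
    have hmem : f^[i] (f a) ∈ s := hf.iterate i (hf ha)
    rw [hg _ hmem, Equiv.swap_apply_of_ne_of_ne]
    · rw [← iterate_succ_apply]
      exact not_isPeriodicPt_of_pos_of_lt_minimalPeriod (Nat.succ_ne_zero i) (by omega)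
    · exact fun e => hab ⟨i + 1, e⟩
  refine ⟨p, ?_⟩
  rw [← Nat.sub_add_cancel hp, iterate_succ_apply, hg b hb, Equiv.swap_apply_right,
    iterate_eq_of_forall_lt hagree, ← iterate_succ_apply, Nat.succ_eq_add_one,
    Nat.sub_add_cancel hp]
  exact iterate_minimalPeriod

end Iterate

namespace Fmap

open Function Set

variable {m : Fmap} {k : Dim} {x z t : Nat} {l : List (Nat × Bool)}

theorem exd_ne_nil (h : inv_hmap m) (hz : exd m z) : z ≠ nil := by
  induction m with
  | V => exact hz.elim
  | I m0 d ih => rcases hz with rfl | hz; exacts [h.2.1, ih h.1 hz]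
  | L m0 _ _ _ ih => exact ih h.1 hz

theorem finite_exd (m : Fmap) : {z | exd m z}.Finite := by
  induction m with
  | V => exact Set.finite_empty
  | I m0 d ih => exact ih.insert d
  | L m0 _ _ _ ih => exact ih

theorem exd_of_succd (h : inv_hmap m) (hz : succd m k z) : exd m z := by
  induction m with
  | V => exact hz rfl
  | I m0 d ih => exact Or.inr (ih h.1 hz)
  | L m0 k0 x0 y0 ih =>
    simp only [succd, A] at hz
    split_ifs at hz with hk hzx
    · exact hzx ▸ h.2.1
    all_goals exact ih h.1 hz

theorem exd_of_predd (h : inv_hmap m) (hz : predd m k z) : exd m z := by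
  induction m with
  | V => exact hz rfl
  | I m0 d ih => exact Or.inr (ih h.1 hz)
  | L m0 k0 x0 y0 ih =>
    simp only [predd, A_1] at hz
    split_ifs at hz with hk hzy
    · exact hzy ▸ h.2.2.1
    all_goals exact ih h.1 hz

theorem exd_A (h : inv_hmap m) (hz : succd m k z) : exd m (A m k z) := by
  induction m with
  | V => exact hz rfl
  | I m0 d ih => exact Or.inr (ih h.1 hz)
  | L m0 k0 x0 y0 ih =>
    simp only [succd, A] at hz ⊢
    split_ifs at hz ⊢
    · exact h.2.2.1
    all_goals exact ih h.1 hz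

theorem exd_A_1 (h : inv_hmap m) (hz : predd m k z) : exd m (A_1 m k z) := by
  induction m with
  | V => exact hz rfl
  | I m0 d ih => exact Or.inr (ih h.1 hz)
  | L m0 k0 x0 y0 ih =>
    simp only [predd, A_1] at hz ⊢
    split_ifs at hz ⊢
    · exact h.2.1
    all_goals exact ih h.1 hz

theorem exd_bottom (h : inv_hmap m) (hz : exd m z) : exd m (bottom m k z) := by
  induction m generalizing z with
  | V => exact hz.elim
  | I m0 d ih =>
    simp only [bottom]
    split_ifs with hzd
    · exact Or.inl hzd
    · exact Or.inr (ih h.1 (hz.resolve_left hzd))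
  | L m0 k0 x0 y0 ih =>
    simp only [bottom]
    split_ifs
    exacts [ih h.1 h.2.1, ih h.1 hz, ih h.1 hz]

theorem exd_top (h : inv_hmap m) (hz : exd m z) : exd m (top m k z) := by
  induction m generalizing z with
  | V => exact hz.elim
  | I m0 d ih =>
    simp only [top]
    split_ifs with hzd
    · exact Or.inl hzd
    · exact Or.inr (ih h.1 (hz.resolve_left hzd))
  | L m0 k0 x0 y0 ih =>
    simp only [top]
    split_ifs
    exacts [ih h.1 h.2.2.1, ih h.1 hz, ih h.1 hz]

theorem A_eq_nil_of_not_exd (h : inv_hmap m) (hz : ¬ exd m z) : A m k z = nil :=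
  of_not_not fun hs => hz (exd_of_succd h hs)

theorem A_1_eq_nil_of_not_exd (h : inv_hmap m) (hz : ¬ exd m z) : A_1 m k z = nil :=
  of_not_not fun hs => hz (exd_of_predd h hs)

-- These laws depend on each other in the inductive step, so they are proved together.
structure OrbitLaws (m : Fmap) (k : Dim) : Prop where
  A_top : ∀ {z}, exd m z → A m k (top m k z) = nil
  A_1_bottom : ∀ {z}, exd m z → A_1 m k (bottom m k z) = nil
  top_eq_self : ∀ {z}, exd m z → A m k z = nil → top m k z = z
  bottom_eq_self : ∀ {z}, exd m z → A_1 m k z = nil → bottom m k z = z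
  bottom_eq_iff_top_eq : ∀ {z t}, exd m z → exd m t →
    (bottom m k z = bottom m k t ↔ top m k z = top m k t)
  cA_eq : ∀ {z}, exd m z → cA m k z = if A m k z = nil then bottom m k z else A m k z
  cA_1_eq : ∀ {z}, exd m z → cA_1 m k z = if A_1 m k z = nil then top m k z else A_1 m k z

namespace OrbitLaws

theorem bottom_top (hm : OrbitLaws m k) (h : inv_hmap m) (hz : exd m z) :
    bottom m k (top m k z) = bottom m k z :=
  (hm.bottom_eq_iff_top_eq (exd_top h hz) hz).2 (hm.top_eq_self (exd_top h hz) (hm.A_top hz))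

theorem top_bottom (hm : OrbitLaws m k) (h : inv_hmap m) (hz : exd m z) :
    top m k (bottom m k z) = top m k z :=
  (hm.bottom_eq_iff_top_eq (exd_bottom h hz) hz).1
    (hm.bottom_eq_self (exd_bottom h hz) (hm.A_1_bottom hz))

theorem bottom_ne_of_prec_L (hm : OrbitLaws m k) {x y : Nat} (hp : prec_L m k x y) :
    bottom m k x ≠ y := by
  intro e
  apply hp.2.2.2.2
  rw [hm.cA_eq hp.1, if_pos (of_not_not hp.2.2.1), e]

theorem top_ne_of_prec_L (hm : OrbitLaws m k) {x y : Nat} (hp : prec_L m k x y) :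
    top m k y ≠ x := by
  intro e
  apply hm.bottom_ne_of_prec_L hp
  have hx : top m k x = x := hm.top_eq_self hp.1 (of_not_not hp.2.2.1)
  rw [(hm.bottom_eq_iff_top_eq hp.1 hp.2.1).2 (by rw [e, hx]),
    hm.bottom_eq_self hp.2.1 (of_not_not hp.2.2.2.1)]

theorem insert (hm : OrbitLaws m k) (h : inv_hmap m) {d : Nat} (hd : ¬ exd m d) :
    OrbitLaws (I m d) k := by
  have hAd : A m k d = nil := A_eq_nil_of_not_exd h hd
  have hA1d : A_1 m k d = nil := A_1_eq_nil_of_not_exd h hd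
  have hne : ∀ {z}, exd m z → z ≠ d := fun hz e => hd (e ▸ hz)
  constructor
  all_goals simp only [exd, A, A_1, top, bottom, cA, cA_1]
  · rintro z (rfl | hz)
    · simp [hAd]
    · simp [hne hz, hm.A_top hz]
  · rintro z (rfl | hz)
    · simp [hA1d]
    · simp [hne hz, hm.A_1_bottom hz]
  · rintro z (rfl | hz) hA
    · simp
    · simp [hne hz, hm.top_eq_self hz hA]
  · rintro z (rfl | hz) hA
    · simp
    · simp [hne hz, hm.bottom_eq_self hz hA]
  · rintro z t (rfl | hz) (rfl | ht)
    · simp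
    · simp [hne ht, (hne (exd_bottom h ht)).symm, (hne (exd_top h ht)).symm]
    · simp [hne hz, hne (exd_bottom h hz), hne (exd_top h hz)]
    · simp [hne hz, hne ht, hm.bottom_eq_iff_top_eq hz ht]
  · rintro z (rfl | hz)
    · simp [hAd]
    · simp [hne hz, hm.cA_eq hz]
  · rintro z (rfl | hz)
    · simp [hA1d]
    · simp [hne hz, hm.cA_1_eq hz]

theorem link_of_ne (hm : OrbitLaws m k) {k0 : Dim} (hk : k ≠ k0) (x y : Nat) :
    OrbitLaws (L m k0 x y) k := by
  obtain ⟨h1, h2, h3, h4, h5, h6, h7⟩ := hm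
  constructor <;> simp only [exd, A, A_1, top, bottom, cA, cA_1, if_neg hk] <;> assumption

theorem cA_link_eq (hm : OrbitLaws m k) (h : inv_hmap m) {x y : Nat} (hp : prec_L m k x y)
    (hz : exd m z) :
    cA (L m k x y) k z =
      if A (L m k x y) k z = nil then bottom (L m k x y) k z else A (L m k x y) k z := by
  have hby : bottom m k y = y := hm.bottom_eq_self hp.2.1 (of_not_not hp.2.2.2.1)
  simp only [A, bottom, cA, if_true]
  by_cases hzx : z = x
  · simp [hzx, exd_ne_nil h hp.2.1]
  by_cases hzt : z = top m k y
  · subst hzt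
    simp [hzx, hm.A_top hp.2.1, hm.bottom_top h hp.2.1, hby]
  rw [hm.cA_eq hz]
  simp only [hzx, hzt, if_false]
  split_ifs with hA hzy <;> try rfl
  exact absurd ((hm.top_eq_self hz hA).symm.trans
    ((hm.bottom_eq_iff_top_eq hz hp.2.1).1 (hzy.trans hby.symm))) hzt

theorem cA_1_link_eq (hm : OrbitLaws m k) (h : inv_hmap m) {x y : Nat} (hp : prec_L m k x y)
    (hz : exd m z) :
    cA_1 (L m k x y) k z =
      if A_1 (L m k x y) k z = nil then top (L m k x y) k z else A_1 (L m k x y) k z := by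
  have htx : top m k x = x := hm.top_eq_self hp.1 (of_not_not hp.2.2.1)
  simp only [A_1, top, cA_1, if_true]
  by_cases hzy : z = y
  · simp [hzy, exd_ne_nil h hp.1]
  by_cases hzb : z = bottom m k x
  · subst hzb
    simp [hzy, hm.A_1_bottom hp.1, hm.top_bottom h hp.1, htx]
  rw [hm.cA_1_eq hz]
  simp only [hzy, hzb, if_false]
  split_ifs with hA hzx <;> try rfl
  exact absurd ((hm.bottom_eq_self hz hA).symm.trans
    ((hm.bottom_eq_iff_top_eq hz hp.1).2 (hzx.trans htx.symm))) hzb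

theorem link (hm : OrbitLaws m k) (h : inv_hmap m) {x y : Nat} (hp : prec_L m k x y) :
    OrbitLaws (L m k x y) k := by
  have hAx : A m k x = nil := of_not_not hp.2.2.1
  have hA1y : A_1 m k y = nil := of_not_not hp.2.2.2.1
  have htx : top m k x = x := hm.top_eq_self hp.1 hAx
  have hby : bottom m k y = y := hm.bottom_eq_self hp.2.1 hA1y
  have hx0 : x ≠ nil := exd_ne_nil h hp.1
  have hy0 : y ≠ nil := exd_ne_nil h hp.2.1
  have hbx : bottom m k x ≠ y := hm.bottom_ne_of_prec_L hp
  have hty : top m k y ≠ x := hm.top_ne_of_prec_L hp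
  refine ⟨?_, ?_, ?_, ?_, ?_, hm.cA_link_eq h hp, hm.cA_1_link_eq h hp⟩
  all_goals simp only [exd, A, A_1, top, bottom, if_true]
  · intro z hz
    split_ifs with hzx
    · simp [hm.A_top hp.2.1]
    · simp [hm.A_top hz]
  · intro z hz
    split_ifs with hzy
    · simp [hm.A_1_bottom hp.1]
    · simp [hm.A_1_bottom hz]
  · intro z hz hA
    have hzx : z ≠ x := by rintro rfl; simp [hy0] at hA
    simp only [hzx, if_false] at hA
    simp [hm.top_eq_self hz hA, hzx]
  · intro z hz hA
    have hzy : z ≠ y := by rintro rfl; simp [hx0] at hA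
    simp only [hzy, if_false] at hA
    simp [hm.bottom_eq_self hz hA, hzy]
  · intro z t hz ht
    have hzt := hm.bottom_eq_iff_top_eq hz ht
    have hzy := hm.bottom_eq_iff_top_eq hz hp.2.1
    have hty' := hm.bottom_eq_iff_top_eq ht hp.2.1
    have hzx := hm.bottom_eq_iff_top_eq hz hp.1
    have htx' := hm.bottom_eq_iff_top_eq ht hp.1
    rw [hby] at hzy hty'
    rw [htx] at hzx htx'
    grind

end OrbitLaws

theorem orbitLaws (h : inv_hmap m) (k : Dim) : OrbitLaws m k := by
  induction m with
  | V => constructor <;> simp [exd]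
  | I m0 d ih => exact (ih h.1).insert h.1 h.2.2
  | L m0 k0 x y ih =>
    by_cases hk : k = k0
    · subst hk; exact (ih h.1).link h.1 h.2
    · exact (ih h.1).link_of_ne hk x y

theorem A_nil (h : inv_hmap m) : A m k nil = nil :=
  A_eq_nil_of_not_exd h fun hz => exd_ne_nil h hz rfl

theorem A_1_A (h : inv_hmap m) (hz : succd m k z) : A_1 m k (A m k z) = z := by
  induction m with
  | V => exact absurd rfl hz
  | I m0 d ih => exact ih h.1 hz
  | L m0 k0 x y ih =>
    by_cases hk : k = k0
    · subst hk
      simp only [succd, A, A_1, if_true] at hz ⊢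
      by_cases hzx : z = x
      · simp [hzx]
      have hz0 : succd m0 k z := by simpa [succd, hzx] using hz
      have hAy : A m0 k z ≠ y := fun e => h.2.2.2.2.1 (show A_1 m0 k y ≠ nil by
        rw [← e, ih h.1 hz0]; exact exd_ne_nil h.1 (exd_of_succd h.1 hz0))
      simp [hzx, hAy, ih h.1 hz0]
    · simp only [succd, A, A_1, if_neg hk] at hz ⊢
      exact ih h.1 hz

theorem A_A_1 (h : inv_hmap m) (hz : predd m k z) : A m k (A_1 m k z) = z := by
  induction m with
  | V => exact absurd rfl hz
  | I m0 d ih => exact ih h.1 hz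
  | L m0 k0 x y ih =>
    by_cases hk : k = k0
    · subst hk
      simp only [predd, A, A_1, if_true] at hz ⊢
      by_cases hzy : z = y
      · simp [hzy]
      have hz0 : predd m0 k z := by simpa [predd, hzy] using hz
      have hAx : A_1 m0 k z ≠ x := fun e => h.2.2.2.1 (show A m0 k x ≠ nil by
        rw [← e, ih h.1 hz0]; exact exd_ne_nil h.1 (exd_of_predd h.1 hz0))
      simp [hzy, hAx, ih h.1 hz0]
    · simp only [predd, A, A_1, if_neg hk] at hz ⊢
      exact ih h.1 hz

theorem exd_cA (h : inv_hmap m) (hz : exd m z) : exd m (cA m k z) := by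
  rw [(orbitLaws h k).cA_eq hz]
  split_ifs with hA
  exacts [exd_bottom h hz, exd_A h hA]

theorem exd_cA_1 (h : inv_hmap m) (hz : exd m z) : exd m (cA_1 m k z) := by
  rw [(orbitLaws h k).cA_1_eq hz]
  split_ifs with hA
  exacts [exd_top h hz, exd_A_1 h hA]

theorem cA_1_cA (h : inv_hmap m) (hz : exd m z) : cA_1 m k (cA m k z) = z := by
  have hm := orbitLaws h k
  rw [hm.cA_eq hz]
  split_ifs with hA
  · rw [hm.cA_1_eq (exd_bottom h hz), if_pos (hm.A_1_bottom hz), hm.top_bottom h hz,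
      hm.top_eq_self hz hA]
  · rw [hm.cA_1_eq (exd_A h hA), A_1_A h hA, if_neg (exd_ne_nil h hz)]

theorem cA_cA_1 (h : inv_hmap m) (hz : exd m z) : cA m k (cA_1 m k z) = z := by
  have hm := orbitLaws h k
  rw [hm.cA_1_eq hz]
  split_ifs with hA
  · rw [hm.cA_eq (exd_top h hz), if_pos (hm.A_top hz), hm.bottom_top h hz,
      hm.bottom_eq_self hz hA]
  · rw [hm.cA_eq (exd_A_1 h hA), A_A_1 h hA, if_neg (exd_ne_nil h hz)]

theorem mapsTo_cA (h : inv_hmap m) (k : Dim) : MapsTo (cA m k) {z | exd m z} {z | exd m z} :=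
  fun _ => exd_cA h

theorem mapsTo_cA_1 (h : inv_hmap m) (k : Dim) :
    MapsTo (cA_1 m k) {z | exd m z} {z | exd m z} :=
  fun _ => exd_cA_1 h

theorem injOn_cA (h : inv_hmap m) (k : Dim) : InjOn (cA m k) {z | exd m z} :=
  LeftInvOn.injOn fun _ => cA_1_cA h

theorem injOn_cA_1 (h : inv_hmap m) (k : Dim) : InjOn (cA_1 m k) {z | exd m z} :=
  LeftInvOn.injOn fun _ => cA_cA_1 h

theorem mapsTo_cF (h : inv_hmap m) : MapsTo (cF m) {z | exd m z} {z | exd m z} :=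
  (mapsTo_cA_1 h _).comp (mapsTo_cA_1 h _)

theorem injOn_cF (h : inv_hmap m) : InjOn (cF m) {z | exd m z} :=
  (injOn_cA_1 h _).comp (injOn_cA_1 h _) (mapsTo_cA_1 h _)

theorem expf_trans {u : Nat} (h₁ : expf m z t) (h₂ : expf m t u) : expf m z u :=
  ⟨h₁.1, Reaches.trans h₁.2 h₂.2⟩

theorem expf_symm (h : inv_hmap m) (he : expf m z t) : expf m t z :=
  ⟨Reaches.mem (mapsTo_cF h) he.1 he.2,
    Reaches.symm (finite_exd m) (mapsTo_cF h) (injOn_cF h) he.1 he.2⟩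

theorem expe_refl (hz : exd m z) : expe m z z := ⟨hz, Reaches.refl _ z⟩

theorem expe_trans {u : Nat} (h₁ : expe m z t) (h₂ : expe m t u) : expe m z u :=
  ⟨h₁.1, Reaches.trans h₁.2 h₂.2⟩

theorem expe_symm (h : inv_hmap m) (he : expe m z t) : expe m t z :=
  ⟨Reaches.mem (mapsTo_cA h _) he.1 he.2,
    Reaches.symm (finite_exd m) (mapsTo_cA h _) (injOn_cA h _) he.1 he.2⟩

theorem exists_iterate_A_bottom (h : inv_hmap m) (hz : exd m z) :
    ∃ n, (A m k)^[n] (bottom m k z) = z := by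
  induction m generalizing z with
  | V => exact hz.elim
  | I m0 d ih =>
    by_cases hzd : z = d
    · exact ⟨0, by simp [bottom, hzd]⟩
    obtain ⟨n, hn⟩ := ih h.1 (hz.resolve_left hzd)
    refine ⟨n, ?_⟩
    rwa [show bottom (I m0 d) k z = bottom m0 k z from if_neg hzd]
  | L m0 k0 x y ih =>
    by_cases hk : k = k0
    swap
    · have hA : A (L m0 k0 x y) k = A m0 k := funext fun _ => if_neg hk
      rw [hA, show bottom (L m0 k0 x y) k z = bottom m0 k z from if_neg hk]
      exact ih h.1 hz
    subst hk
    have hAx : A m0 k x = nil := of_not_not h.2.2.2.1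
    have hagree : ∀ {n b}, (A m0 k)^[n] b ≠ nil →
        (A (L m0 k x y) k)^[n] b = (A m0 k)^[n] b := fun {n b} hn =>
      iterate_eq_of_forall_lt fun i hi => by
        have hx : (A m0 k)^[i] b ≠ x := fun e =>
          apply_iterate_ne_of_iterate_ne (A_nil h.1) hn hi (e ▸ hAx)
        simp [A, hx]
    obtain ⟨n, hn⟩ := ih h.1 hz
    have hpath : (A (L m0 k x y) k)^[n] (bottom m0 k z) = z := by
      rw [hagree (by rw [hn]; exact exd_ne_nil h.1 hz), hn]
    by_cases hzy : bottom m0 k z = y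
    · obtain ⟨n₀, hn₀⟩ := ih h.1 h.2.1
      have hpath₀ : (A (L m0 k x y) k)^[n₀] (bottom m0 k x) = x := by
        rw [hagree (by rw [hn₀]; exact exd_ne_nil h.1 h.2.1), hn₀]
      refine ⟨n + 1 + n₀, ?_⟩
      rw [show bottom (L m0 k x y) k z = bottom m0 k x by simp [bottom, hzy],
        iterate_add_apply, hpath₀, iterate_succ_apply, show A (L m0 k x y) k x = y by simp [A]]
      exact hzy ▸ hpath
    · refine ⟨n, ?_⟩
      rwa [show bottom (L m0 k x y) k z = bottom m0 k z by simp [bottom, hzy]]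

theorem expe_bottom (h : inv_hmap m) (hz : exd m z) : expe m (bottom m Dim.zero z) z := by
  obtain ⟨n, hn⟩ := exists_iterate_A_bottom (k := Dim.zero) h hz
  refine ⟨exd_bottom h hz, n, ?_⟩
  rw [iterate_eq_of_forall_lt fun i hi => ?_, hn]
  have hA := apply_iterate_ne_of_iterate_ne (A_nil h) (hn ▸ exd_ne_nil h hz) hi
  rw [(orbitLaws h _).cA_eq (exd_of_succd h hA), if_neg hA]

theorem expe_of_bottom_eq (h : inv_hmap m) (hz : exd m z) (ht : exd m t)
    (e : bottom m Dim.zero z = bottom m Dim.zero t) : expe m z t :=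
  expe_trans (expe_symm h (expe_bottom h hz)) (e ▸ expe_bottom h ht)

theorem B_L_self (m0 : Fmap) (k : Dim) (x y : Nat) : B (L m0 k x y) k x = m0 := if_pos ⟨rfl, rfl⟩

theorem B_L_of_not {m0 : Fmap} {k0 : Dim} {x0 : Nat} (y0 : Nat) (hc : ¬ (k = k0 ∧ x = x0)) :
    B (L m0 k0 x0 y0) k x = L (B m0 k x) k0 x0 y0 := if_neg hc

theorem exd_B : exd (B m k x) z ↔ exd m z := by
  induction m with
  | V => rfl
  | I m0 d ih => exact or_congr_right ih
  | L m0 k0 x0 y0 ih =>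
    simp only [B]
    split_ifs
    exacts [Iff.rfl, ih]

theorem B_eq_self_of_not_succd (h : inv_hmap m) (hs : ¬ succd m k x) : B m k x = m := by
  induction m with
  | V => rfl
  | I m0 d ih => exact congrArg (I · d) (ih h.1 hs)
  | L m0 k0 x0 y0 ih =>
    simp only [succd, A, not_not] at hs
    simp only [B]
    split_ifs with hc
    · obtain ⟨rfl, rfl⟩ := hc
      simp [exd_ne_nil h.1 h.2.2.1] at hs
    · rw [ih h.1]
      simp only [succd, not_not]
      split_ifs at hs <;> simp_all

theorem A_B (h : inv_hmap m) (j : Dim) :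
    A (B m k x) j z = if j = k ∧ z = x then nil else A m j z := by
  induction m with
  | V => simp [A, B]
  | I m0 d ih => exact ih h.1
  | L m0 k0 x0 y0 ih =>
    have hA0 : A m0 k0 x0 = nil := of_not_not h.2.2.2.1
    by_cases hc : k = k0 ∧ x = x0
    · obtain ⟨rfl, rfl⟩ := hc
      simp only [B, A, and_self, if_true]
      split_ifs <;> simp_all
    · simp only [B, if_neg hc, A, ih h.1]
      split_ifs <;> simp_all

theorem A_ne_of_not_predd (h : inv_hmap m) (hs : succd m k x) {y : Nat} (hy : ¬ predd m k y) :
    A m k x ≠ y := fun e =>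
  hy (show A_1 m k y ≠ nil by rw [← e, A_1_A h hs]; exact exd_ne_nil h (exd_of_succd h hs))

theorem succd_of_succd_L {m0 : Fmap} {k0 : Dim} {x0 y0 : Nat} (hc : ¬ (k = k0 ∧ x = x0))
    (hs : succd (L m0 k0 x0 y0) k x) : succd m0 k x := by
  simp only [succd, A] at hs
  split_ifs at hs with hk hx
  exacts [absurd ⟨hk, hx⟩ hc, hs, hs]

theorem A_1_B (h : inv_hmap m) (hs : succd m k x) (j : Dim) :
    A_1 (B m k x) j z = if j = k ∧ z = A m k x then nil else A_1 m j z := by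
  induction m with
  | V => exact absurd rfl hs
  | I m0 d ih => exact ih h.1 hs
  | L m0 k0 x0 y0 ih =>
    have hA1 : A_1 m0 k0 y0 = nil := of_not_not h.2.2.2.2.1
    by_cases hc : k = k0 ∧ x = x0
    · obtain ⟨rfl, rfl⟩ := hc
      simp only [B, A_1, A, and_self, if_true]
      split_ifs <;> simp_all
    · have hs0 := succd_of_succd_L hc hs
      have hAy : k = k0 → A m0 k x ≠ y0 := by
        rintro rfl; exact A_ne_of_not_predd h.1 hs0 h.2.2.2.2.1
      simp only [B, if_neg hc, A_1, A, ih h.1 hs0]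
      split_ifs <;> simp_all

theorem bottom_B_of_ne {j : Dim} (hjk : j ≠ k) : bottom (B m k x) j = bottom m j := by
  induction m with
  | V => rfl
  | I m0 d ih => funext z; simp [B, bottom, ih]
  | L m0 k0 x0 y0 ih =>
    funext z
    by_cases hc : k = k0 ∧ x = x0
    · obtain ⟨rfl, rfl⟩ := hc
      simp [B, bottom, hjk]
    · simp [B, hc, bottom, ih]

theorem top_B_of_ne {j : Dim} (hjk : j ≠ k) : top (B m k x) j = top m j := by
  induction m with
  | V => rfl
  | I m0 d ih => funext z; simp [B, top, ih]
  | L m0 k0 x0 y0 ih =>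
    funext z
    by_cases hc : k = k0 ∧ x = x0
    · obtain ⟨rfl, rfl⟩ := hc
      simp [B, top, hjk]
    · simp [B, hc, top, ih]

theorem bottom_B_cases (h : inv_hmap m) (hs : succd m k x) (hz : exd m z) :
    bottom (B m k x) k z = bottom m k z ∨
      (bottom (B m k x) k z = A m k x ∧ bottom m k z = bottom m k x) := by
  induction m generalizing z with
  | V => exact absurd rfl hs
  | I m0 d ih =>
    have hxd : x ≠ d := fun e => h.2.2 (e ▸ exd_of_succd h.1 hs)
    simp only [B, bottom, hxd, if_false]
    split_ifs with hzd
    · exact Or.inl rfl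
    · exact ih h.1 hs (hz.resolve_left hzd)
  | L m0 k0 x0 y0 ih =>
    have hbx0 : bottom m0 k0 x0 ≠ y0 := (orbitLaws h.1 k0).bottom_ne_of_prec_L h.2
    by_cases hc : k = k0 ∧ x = x0
    · obtain ⟨rfl, rfl⟩ := hc
      simp only [B, bottom, A, and_self, if_true, hbx0, if_false]
      split_ifs <;> simp_all
    have hs0 := succd_of_succd_L hc hs
    rw [B_L_of_not y0 hc]
    by_cases hk : k = k0
    · subst hk
      have hx : x ≠ x0 := fun e => hc ⟨rfl, e⟩
      have hAy : A m0 k x ≠ y0 := A_ne_of_not_predd h.1 hs0 h.2.2.2.2.1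
      have ihz := ih h.1 hs0 hz
      have ihx0 := ih h.1 hs0 h.2.1
      simp only [bottom, A, hx, if_true, if_false]
      split_ifs <;> grind
    · simp only [bottom, A, hk, if_false]
      exact ih h.1 hs0 hz

theorem bottom_B_of_bottom_ne (h : inv_hmap m) (hs : succd m k x) (hz : exd m z)
    (hb : bottom m k z ≠ bottom m k x) : bottom (B m k x) k z = bottom m k z :=
  (bottom_B_cases h hs hz).resolve_right fun e => hb e.2

theorem bottom_B_self (h : inv_hmap m) (hs : succd m k x) :
    bottom (B m k x) k x = bottom m k x := by
  induction m with
  | V => exact absurd rfl hs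
  | I m0 d ih =>
    have hxd : x ≠ d := fun e => h.2.2 (e ▸ exd_of_succd h.1 hs)
    simp only [B, bottom, hxd, if_false]
    exact ih h.1 hs
  | L m0 k0 x0 y0 ih =>
    have hbx0 : bottom m0 k0 x0 ≠ y0 := (orbitLaws h.1 k0).bottom_ne_of_prec_L h.2
    by_cases hc : k = k0 ∧ x = x0
    · obtain ⟨rfl, rfl⟩ := hc
      simp [B_L_self, bottom, hbx0]
    have hs0 := succd_of_succd_L hc hs
    rw [B_L_of_not y0 hc]
    by_cases hk : k = k0
    · subst hk
      have := bottom_B_cases h.1 hs0 h.2.1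
      simp only [bottom, ih h.1 hs0, if_true]
      split_ifs <;> grind
    · simp only [bottom, hk, if_false]
      exact ih h.1 hs0

theorem bottom_B_top (h : inv_hmap m) (hs : succd m k x) :
    bottom (B m k x) k (top m k x) = A m k x := by
  induction m with
  | V => exact absurd rfl hs
  | I m0 d ih =>
    have hx := exd_of_succd h.1 hs
    have hxd : x ≠ d := fun e => h.2.2 (e ▸ hx)
    have htd : top m0 k x ≠ d := fun e => h.2.2 (e ▸ exd_top h.1 hx)
    simp only [B, bottom, top, A, hxd, htd, if_false]
    exact ih h.1 hs
  | L m0 k0 x0 y0 ih =>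
    have hm := orbitLaws h.1 k0
    have htx0 : top m0 k0 x0 = x0 := hm.top_eq_self h.2.1 (of_not_not h.2.2.2.1)
    have hby0 : bottom m0 k0 y0 = y0 := hm.bottom_eq_self h.2.2.1 (of_not_not h.2.2.2.2.1)
    have hbty0 : bottom m0 k0 (top m0 k0 y0) = y0 := by rw [hm.bottom_top h.1 h.2.2.1, hby0]
    by_cases hc : k = k0 ∧ x = x0
    · obtain ⟨rfl, rfl⟩ := hc
      simp [B_L_self, top, A, htx0, hbty0]
    have hs0 := succd_of_succd_L hc hs
    rw [B_L_of_not y0 hc]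
    by_cases hk : k = k0
    · subst hk
      have hx : x ≠ x0 := fun e => hc ⟨rfl, e⟩
      have hAy : A m0 k x ≠ y0 := A_ne_of_not_predd h.1 hs0 h.2.2.2.2.1
      simp only [top, bottom, A, hx, if_true, if_false]
      by_cases htx : top m0 k x = x0
      · have hbx : bottom m0 k x ≠ y0 := fun e => hm.bottom_ne_of_prec_L h.2
          (by rw [← e, hm.bottom_eq_iff_top_eq h.2.1 (exd_of_succd h.1 hs0), htx, htx0])
        have hB : bottom (B m0 k x) k (top m0 k y0) = y0 := by
          rw [bottom_B_of_bottom_ne h.1 hs0 (exd_top h.1 h.2.2.1) (by rw [hbty0]; exact hbx.symm),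
            hbty0]
        rw [if_pos htx, hB, if_pos rfl, ← htx, ih h.1 hs0]
      · rw [if_neg htx, ih h.1 hs0, if_neg hAy]
    · simp only [top, bottom, A, hk, if_false]
      exact ih h.1 hs0

theorem inv_hmap_B (h : inv_hmap m) (k : Dim) (x : Nat) : inv_hmap (B m k x) := by
  induction m with
  | V => trivial
  | I m0 d ih => exact ⟨ih h.1, h.2.1, fun hd => h.2.2 (exd_B.1 hd)⟩
  | L m0 k0 x0 y0 ih =>
    by_cases hc : k = k0 ∧ x = x0
    · obtain ⟨rfl, rfl⟩ := hc
      rw [B_L_self]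
      exact h.1
    rw [B_L_of_not y0 hc]
    by_cases hs : succd m0 k x
    swap
    · rw [B_eq_self_of_not_succd h.1 hs]
      exact h
    have hA : A (B m0 k x) k0 x0 = nil := by
      rw [A_B h.1, if_neg fun e => hc ⟨e.1.symm, e.2.symm⟩]
      exact of_not_not h.2.2.2.1
    have hA_1 : A_1 (B m0 k x) k0 y0 = nil := by
      rw [A_1_B h.1 hs]
      split_ifs
      exacts [rfl, of_not_not h.2.2.2.2.1]
    refine ⟨ih h.1, exd_B.2 h.2.1, exd_B.2 h.2.2.1, fun hs' => hs' hA, fun hp => hp hA_1, ?_⟩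
    rw [(orbitLaws (ih h.1) k0).cA_eq (exd_B.2 h.2.1), if_pos hA]
    by_cases hk : k0 = k
    · subst hk
      rcases bottom_B_cases h.1 hs h.2.1 with e | ⟨e, -⟩ <;> rw [e]
      exacts [(orbitLaws h.1 k0).bottom_ne_of_prec_L h.2,
        A_ne_of_not_predd h.1 hs h.2.2.2.2.1]
    · rw [bottom_B_of_ne hk]
      exact (orbitLaws h.1 k0).bottom_ne_of_prec_L h.2

theorem A_ne_bottom (h : inv_hmap m) (hs : succd m k x) (hz : exd m z) :
    A m k x ≠ bottom m k z := fun e => exd_ne_nil h (exd_of_succd h hs)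
  (by rw [← A_1_A h hs, e, (orbitLaws h k).A_1_bottom hz])

theorem exd_swap (h : inv_hmap m) (hs : succd m k x) (hz : exd m z) :
    exd m (Equiv.swap (A m k x) (bottom m k x) z) := by
  rw [Equiv.swap_apply_def]
  split_ifs
  exacts [exd_bottom h (exd_of_succd h hs), exd_A h hs, hz]

/-- Breaking `x → y` in the `k`-orbit `x₀ → ⋯ → x → y → ⋯ → top` makes `x` jump back to `x₀`
and the top jump back to `y`. -/
theorem cA_B (h : inv_hmap m) (hs : succd m k x) (hz : exd m z) :
    cA (B m k x) k z = Equiv.swap (A m k x) (bottom m k x) (cA m k z) := by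
  have hm := orbitLaws h k
  have hx := exd_of_succd h hs
  rw [(orbitLaws (inv_hmap_B h k x) k).cA_eq (exd_B.2 hz), A_B h, hm.cA_eq hz]
  by_cases hzx : z = x
  · subst hzx
    have hA : A m k z ≠ nil := hs
    simp [bottom_B_self h hs, hA]
  by_cases hzt : z = top m k x
  · subst hzt
    simp [hzx, hm.A_top hx, bottom_B_top h hs, hm.bottom_top h hx]
  simp only [hzx, and_false, if_false]
  split_ifs with hA
  · have hbz : bottom m k z ≠ bottom m k x := fun e =>
      hzt ((hm.top_eq_self hz hA).symm.trans ((hm.bottom_eq_iff_top_eq hz hx).1 e))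
    rw [bottom_B_of_bottom_ne h hs hz hbz,
      Equiv.swap_apply_of_ne_of_ne (A_ne_bottom h hs hz).symm hbz]
  · rw [Equiv.swap_apply_of_ne_of_ne (fun e => hzx (by rw [← A_1_A h hA, e, A_1_A h hs]))
      (A_ne_bottom h hA hx)]

theorem cA_1_B (h : inv_hmap m) (hs : succd m k x) (hz : exd m z) :
    cA_1 (B m k x) k z = cA_1 m k (Equiv.swap (A m k x) (bottom m k x) z) := by
  have hu := exd_cA_1 (k := k) h (exd_swap h hs hz)
  calc cA_1 (B m k x) k z
      = cA_1 (B m k x) k (cA (B m k x) k (cA_1 m k (Equiv.swap (A m k x) (bottom m k x) z))) := by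
        rw [cA_B h hs hu, cA_cA_1 h (exd_swap h hs hz), Equiv.swap_apply_self]
    _ = cA_1 m k (Equiv.swap (A m k x) (bottom m k x) z) := cA_1_cA (inv_hmap_B h k x) (exd_B.2 hu)

theorem cA_1_B_of_ne {j : Dim} (hjk : j ≠ k) (h : inv_hmap m) (hs : succd m k x)
    (hz : exd m z) : cA_1 (B m k x) j z = cA_1 m j z := by
  rw [(orbitLaws (inv_hmap_B h k x) j).cA_1_eq (exd_B.2 hz), (orbitLaws h j).cA_1_eq hz,
    top_B_of_ne hjk]
  simp only [A_1_B h hs j, hjk, false_and, if_false]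

theorem cF_B (h : inv_hmap m) (hs : succd m Dim.zero x) (hz : exd m z) :
    cF (B m Dim.zero x) z = cF m (Equiv.swap (A m Dim.zero x) (bottom m Dim.zero x) z) := by
  rw [cF, cF, cA_1_B h hs hz, cA_1_B_of_ne (by decide) h hs (exd_cA_1 h (exd_swap h hs hz))]

theorem darts_B : {z | exd (B m Dim.zero x) z} = {z | exd m z} := Set.ext fun _ => exd_B

theorem expf_B_bottom_A (h : inv_hmap m) (hs : succd m Dim.zero x)
    (hx : ¬ expf m (A m Dim.zero x) (bottom m Dim.zero x)) :
    expf (B m Dim.zero x) (bottom m Dim.zero x) (A m Dim.zero x) :=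
  ⟨exd_B.2 (exd_bottom h (exd_of_succd h hs)),
    reaches_comp_swap (finite_exd m) (mapsTo_cF h) (injOn_cF h) (exd_A h hs)
      (exd_bottom h (exd_of_succd h hs)) (fun _ hw => cF_B h hs hw)
      fun hr => hx ⟨exd_A h hs, hr⟩⟩

theorem expf_B_of_expf (h : inv_hmap m) (hs : succd m Dim.zero x)
    (hx : ¬ expf m (A m Dim.zero x) (bottom m Dim.zero x)) (he : expf m z t) :
    expf (B m Dim.zero x) z t := by
  have hB := inv_hmap_B h Dim.zero x
  have hy := exd_A h hs
  have hx₀ := exd_bottom (k := Dim.zero) h (exd_of_succd h hs)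
  have hbridge := expf_B_bottom_A h hs hx
  have hg : ∀ w ∈ {z | exd m z}, cF m w =
      cF (B m Dim.zero x) (Equiv.swap (A m Dim.zero x) (bottom m Dim.zero x) w) := fun w hw => by
    rw [cF_B h hs (exd_swap h hs hw), Equiv.swap_apply_self]
  rcases reaches_or_of_reaches_comp_swap (finite_exd m) (darts_B ▸ mapsTo_cF hB)
      (darts_B ▸ injOn_cF hB) hy hx₀ hg he.1 he.2 with hr | ⟨hz, ht⟩
  · exact ⟨exd_B.2 he.1, hr⟩
  have hz' : expf (B m Dim.zero x) (A m Dim.zero x) z := by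
    rcases hz with hz | hz
    exacts [⟨exd_B.2 hy, hz⟩, expf_trans (expf_symm hB hbridge) ⟨exd_B.2 hx₀, hz⟩]
  have ht' : expf (B m Dim.zero x) (A m Dim.zero x) t := by
    rcases ht with ht | ht
    exacts [⟨exd_B.2 hy, ht⟩, expf_trans (expf_symm hB hbridge) ⟨exd_B.2 hx₀, ht⟩]
  exact expf_trans (expf_symm hB hz') ht'

theorem expf_of_expf_B (h : inv_hmap m) (hs : succd m Dim.zero x)
    (he : expf (B m Dim.zero x) z t) :
    expf m z t ∨ ((expf m (A m Dim.zero x) z ∨ expf m (bottom m Dim.zero x) z) ∧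
      (expf m (A m Dim.zero x) t ∨ expf m (bottom m Dim.zero x) t)) := by
  have hy := exd_A h hs
  have hx₀ := exd_bottom (k := Dim.zero) h (exd_of_succd h hs)
  have hz := exd_B.1 he.1
  rcases reaches_or_of_reaches_comp_swap (finite_exd m) (mapsTo_cF h) (injOn_cF h) hy hx₀
      (fun _ hw => cF_B h hs hw) hz he.2 with hr | ⟨hz', ht'⟩
  · exact Or.inl ⟨hz, hr⟩
  · exact Or.inr ⟨hz'.imp (⟨hy, ·⟩) (⟨hx₀, ·⟩), ht'.imp (⟨hy, ·⟩) (⟨hx₀, ·⟩)⟩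

theorem expe_A (h : inv_hmap m) (hs : succd m Dim.zero x) : expe m x (A m Dim.zero x) :=
  ⟨exd_of_succd h hs, 1, by
    simp [(orbitLaws h Dim.zero).cA_eq (exd_of_succd h hs), show A m Dim.zero x ≠ nil from hs]⟩

theorem expe_of_expe_cA (h : inv_hmap m) (hz : exd m z) (he : expe m x (cA m Dim.zero z)) :
    expe m x z :=
  expe_trans he (expe_symm h ⟨hz, reaches_apply _ z⟩)

theorem cA_B_of_not_expe (h : inv_hmap m) (hs : succd m Dim.zero x) (hz : exd m z)
    (hxz : ¬ expe m x z) : cA (B m Dim.zero x) Dim.zero z = cA m Dim.zero z := by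
  rw [cA_B h hs hz, Equiv.swap_apply_of_ne_of_ne]
  · exact fun e => hxz (expe_of_expe_cA h hz (e ▸ expe_A h hs))
  · exact fun e => hxz (expe_of_expe_cA h hz (e ▸ expe_symm h (expe_bottom h (exd_of_succd h hs))))

theorem expe_of_expe_B (h : inv_hmap m) (hs : succd m Dim.zero x) (hz : exd m z)
    (hxz : ¬ expe m x z) (he : expe (B m Dim.zero x) z t) : expe m z t := by
  have hmaps : MapsTo (cA m Dim.zero) {w | exd m w ∧ ¬ expe m x w} {w | exd m w ∧ ¬ expe m x w} :=
    fun w hw => ⟨exd_cA h hw.1, fun he => hw.2 (expe_of_expe_cA h hw.1 he)⟩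
  obtain ⟨-, n, rfl⟩ := he
  exact ⟨hz, n, (iterate_eq_of_eqOn (fun w hw => cA_B_of_not_expe h hs hw.1 hw.2) hmaps
    ⟨hz, hxz⟩ n).symm⟩

theorem A_B_of_not_expe (h : inv_hmap m) (hs : succd m Dim.zero x) (hxz : ¬ expe m x z) :
    A (B m Dim.zero x) Dim.zero z = A m Dim.zero z := by
  rw [A_B h, if_neg]
  rintro ⟨-, rfl⟩
  exact hxz (expe_refl (exd_of_succd h hs))

theorem bottom_B_of_not_expe (h : inv_hmap m) (hs : succd m Dim.zero x) (hz : exd m z)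
    (hxz : ¬ expe m x z) : bottom (B m Dim.zero x) Dim.zero z = bottom m Dim.zero z :=
  bottom_B_of_bottom_ne h hs hz fun e => hxz (expe_of_bottom_eq h (exd_of_succd h hs) hz e.symm)

def oppDart (m : Fmap) : Nat × Bool → Nat
  | (x, b) => if b then bottom m Dim.zero x else A m Dim.zero x

theorem adjacent_faces_iff {p q : Nat × Bool} :
    adjacent_faces m p q ↔ expf m (oppDart m p) (faceDart m q) := by
  obtain ⟨_, _ | _⟩ := p <;> obtain ⟨_, _ | _⟩ := q <;> rfl

theorem faceDart_B (h : inv_hmap m) (hs : succd m Dim.zero x) {p : Nat × Bool}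
    (hp : succd m Dim.zero p.1) (hxp : ¬ expe m x p.1) :
    faceDart (B m Dim.zero x) p = faceDart m p := by
  obtain ⟨_, _ | _⟩ := p
  · exact bottom_B_of_not_expe h hs (exd_of_succd h hp) hxp
  · exact A_B_of_not_expe h hs hxp

theorem oppDart_B (h : inv_hmap m) (hs : succd m Dim.zero x) {p : Nat × Bool}
    (hp : succd m Dim.zero p.1) (hxp : ¬ expe m x p.1) :
    oppDart (B m Dim.zero x) p = oppDart m p := by
  obtain ⟨_, _ | _⟩ := p
  · exact A_B_of_not_expe h hs hxp
  · exact bottom_B_of_not_expe h hs (exd_of_succd h hp) hxp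

theorem expf_B_faceDart_oppDart (h : inv_hmap m) (hs : succd m Dim.zero x)
    (hx : ¬ expf m (A m Dim.zero x) (bottom m Dim.zero x)) (b : Bool) :
    expf (B m Dim.zero x) (faceDart m (x, b)) (oppDart m (x, b)) := by
  cases b
  · exact expf_B_bottom_A h hs hx
  · exact expf_symm (inv_hmap_B h _ _) (expf_B_bottom_A h hs hx)

theorem faceDart_eq_or (m : Fmap) (p : Nat × Bool) :
    faceDart m p = A m Dim.zero p.1 ∨ faceDart m p = bottom m Dim.zero p.1 := by
  obtain ⟨_, _ | _⟩ := p
  exacts [Or.inr rfl, Or.inl rfl]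

theorem not_expf_B (h : inv_hmap m) (hs : succd m Dim.zero x) {w : Nat}
    (hw : w = A m Dim.zero x ∨ w = bottom m Dim.zero x) (hz : ¬ expf m w z) (ht : ¬ expf m w t)
    (hzt : ¬ expf m z t) : ¬ expf (B m Dim.zero x) z t := fun he => by
  rcases expf_of_expf_B h hs he with e | ⟨hz' | hz', ht' | ht'⟩
  all_goals first
    | exact hzt e
    | exact hzt (expf_trans (expf_symm h hz') ht')
    | rcases hw with rfl | rfl <;> contradiction

theorem distinct_edge_list_iff {z : Nat} :
    distinct_edge_list m z l ↔ ∀ p ∈ l, ¬ expe m z p.1 := by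
  induction l with
  | nil => simp [distinct_edge_list]
  | cons p l ih => simp [distinct_edge_list, ih, and_comm]

theorem distinct_face_list_iff {p : Nat × Bool} :
    distinct_face_list m p l ↔ ∀ q ∈ l, distinct_faces m p q := by
  induction l with
  | nil => simp [distinct_face_list]
  | cons q l ih => simp [distinct_face_list, ih, and_comm]

theorem succd_of_pre_ring0 (h0 : pre_ring0 m l) : ∀ p ∈ l, succd m Dim.zero p.1 := by
  induction l with
  | nil => simp
  | cons p l ih =>
    obtain ⟨_, _⟩ := p
    simpa [h0.2.2] using ih h0.1

theorem lastd_mem {q : Nat × Bool} : ∀ {l : List (Nat × Bool)}, lastd (q :: l) ∈ q :: l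
  | [] => List.mem_singleton_self q
  | r :: _ => List.mem_cons_of_mem q (lastd_mem (q := r))

theorem pre_ring2_cons_of_expf (h : inv_hmap m) {q : Nat × Bool} {l : List (Nat × Bool)}
    (he : expf m (oppDart m (lastd (q :: l))) (faceDart m q)) : pre_ring2 m (q :: l) := by
  obtain ⟨_, _ | _⟩ := q <;> rcases l with _ | ⟨r, l⟩
  · exact he
  · exact adjacent_faces_iff.2 he
  · exact expf_symm h he
  · exact adjacent_faces_iff.2 he

theorem pre_ring0_B (h : inv_hmap m) (hs : succd m Dim.zero x) (h0 : pre_ring0 m l)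
    (hd : distinct_edge_list m x l) : pre_ring0 (B m Dim.zero x) l := by
  induction l with
  | nil => trivial
  | cons p l ih =>
    obtain ⟨z, _⟩ := p
    have hxz : ¬ expe m x z := hd.2
    refine ⟨ih h0.1 hd.1, distinct_edge_list_iff.2 fun q hq he => ?_, ?_⟩
    · exact distinct_edge_list_iff.1 h0.2.1 q hq
        (expe_of_expe_B h hs (exd_of_succd h h0.2.2) hxz he)
    · show A (B m Dim.zero x) Dim.zero z ≠ nil
      rw [A_B_of_not_expe h hs hxz]
      exact h0.2.2

theorem pre_ring1_B (h : inv_hmap m) (hs : succd m Dim.zero x)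
    (hx : ¬ expf m (A m Dim.zero x) (bottom m Dim.zero x)) (h0 : pre_ring0 m l)
    (hd : distinct_edge_list m x l) (h1 : pre_ring1 m l) : pre_ring1 (B m Dim.zero x) l := by
  induction l with
  | nil => trivial
  | cons p l ih =>
    refine ⟨ih h0.1 hd.1 h1.1, ?_⟩
    rcases l with _ | ⟨q, l⟩
    · trivial
    have hq : succd m Dim.zero q.1 := succd_of_pre_ring0 h0.1 q List.mem_cons_self
    have hxq : ¬ expe m x q.1 := distinct_edge_list_iff.1 hd.1 q List.mem_cons_self
    show adjacent_faces (B m Dim.zero x) p q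
    rw [adjacent_faces_iff, oppDart_B h hs h0.2.2 hd.2, faceDart_B h hs hq hxq]
    exact expf_B_of_expf h hs hx (adjacent_faces_iff.1 h1.2)

theorem pre_ring2_B (h : inv_hmap m) (hs : succd m Dim.zero x)
    (hx : ¬ expf m (A m Dim.zero x) (bottom m Dim.zero x)) {b : Bool} (h0 : pre_ring0 m l)
    (hd : distinct_edge_list m x l) (h1 : pre_ring1 m ((x, b) :: l))
    (h2 : pre_ring2 m ((x, b) :: l)) : pre_ring2 (B m Dim.zero x) l := by
  rcases l with _ | ⟨q, l⟩
  · trivial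
  have hoff : ∀ p ∈ q :: l, succd m Dim.zero p.1 ∧ ¬ expe m x p.1 := fun p hp =>
    ⟨succd_of_pre_ring0 h0 p hp, distinct_edge_list_iff.1 hd p hp⟩
  have hlast := hoff _ lastd_mem
  have hq := hoff q List.mem_cons_self
  have hin : adjacent_faces m (lastd (q :: l)) (x, b) := h2
  have hout : adjacent_faces m (x, b) q := h1.2
  apply pre_ring2_cons_of_expf (inv_hmap_B h _ _)
  rw [oppDart_B h hs hlast.1 hlast.2, faceDart_B h hs hq.1 hq.2]
  exact expf_trans (expf_trans (expf_B_of_expf h hs hx (adjacent_faces_iff.1 hin))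
    (expf_B_faceDart_oppDart h hs hx b)) (expf_B_of_expf h hs hx (adjacent_faces_iff.1 hout))

theorem pre_ring3_B (h : inv_hmap m) (hs : succd m Dim.zero x) {b : Bool}
    (h0 : pre_ring0 m l) (hd : distinct_edge_list m x l) (h3 : pre_ring3 m l)
    (hdf : distinct_face_list m (x, b) l) : pre_ring3 (B m Dim.zero x) l := by
  induction l with
  | nil => trivial
  | cons p l ih =>
    refine ⟨ih h0.1 hd.1 h3.1 hdf.1, distinct_face_list_iff.2 fun q hql => ?_⟩
    have hq : succd m Dim.zero q.1 := succd_of_pre_ring0 h0.1 q hql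
    have hxq : ¬ expe m x q.1 := distinct_edge_list_iff.1 hd.1 q hql
    unfold distinct_faces
    rw [faceDart_B h hs h0.2.2 hd.2, faceDart_B h hs hq hxq]
    exact not_expf_B h hs (faceDart_eq_or m (x, b)) hdf.2
      (distinct_face_list_iff.1 hdf.1 q hql) (distinct_face_list_iff.1 h3.2 q hql)

end Fmap

theorem pre_ring_B_general (m : Fmap) (x : Nat) (b : Bool) (l0 : List (Nat × Bool))
    (h1 : inv_hmap m)
    (hx : ¬ expf m (A m Dim.zero x) (bottom m Dim.zero x))
    (hr : ring m ((x, b) :: l0)) :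
    pre_ring0 (B m Dim.zero x) l0 ∧ pre_ring1 (B m Dim.zero x) l0 ∧
    pre_ring2 (B m Dim.zero x) l0 ∧ pre_ring3 (B m Dim.zero x) l0 := by
  obtain ⟨-, ⟨h0, hd, hs⟩, hr1, hr2, hr3⟩ := hr
  exact ⟨pre_ring0_B h1 hs h0 hd, pre_ring1_B h1 hs hx h0 hd hr1.1,
    pre_ring2_B h1 hs hx h0 hd hr1 hr2, pre_ring3_B h1 hs h0 hd hr3.1 hr3.2⟩

/-- The four ring conditions are preserved by the first break. -/
theorem pre_ring_B (m : Fmap) (x : Nat) (b : Bool) (l0 : List (Nat × Bool))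
    (h1 : inv_hmap m) (h2 : planar m)
    (hx : ¬ expf m (A m Dim.zero x) (bottom m Dim.zero x))
    (hr : ring m ((x, b) :: l0)) :
    pre_ring0 (B m Dim.zero x) l0 ∧ pre_ring1 (B m Dim.zero x) l0 ∧
    pre_ring2 (B m Dim.zero x) l0 ∧ pre_ring3 (B m Dim.zero x) l0 :=
  pre_ring_B_general m x b l0 h1 hx hr
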